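/- arXiv:1906.07872 — 7 statements merged into one kernel-verified Lean document; each statement's English description precedes it below -/
import Mathlib

section
/- Let G be a finitely generated abelian group (e.g. ℤ^p) acting linearly on a finite-dimensional real vector space E via a representation A. If the fixed space E^G = {v : A(g)v = v for all g} is zero, then every 1-cocycle α : G → E over A (satisfying α(g+h) = α(g) + A(g)α(h)) is a coboundary: there exists x₀ ∈ E with α(g) = x₀ − A(g)x₀ for all g. -/
/-!
Put `D g = 1 - A g`. These operators commute and have no common kernel, and comparing the
cocycle identity for `g + h` and `h + g` gives `D g (α h) = D h (α g)`; we want `x` with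
`α g = D g x` for all `g`. If some `D g` is invertible, `x = (D g)⁻¹ (α g)` works, by
commutativity. Otherwise split `E` by the Fitting decomposition of a non-nilpotent `D g`: both
parts are stable under the whole family, `D g` is invertible on the range part, and the kernel
part has smaller dimension, so induction on the dimension applies. If every `D g` is nilpotent,
commuting nilpotent operators on a nonzero space have a common kernel vector, so `E = 0`.
-/

open Module LinearMap Set

section Ring

variable {k E ι : Type*} [Ring k] [AddCommGroup E] [Module k E]

lemma mapsTo_ker_of_commute {f g : End k E} (h : Commute f g) : MapsTo g (ker f) (ker f) :=
  fun x (hx : f x = 0) =>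
    show f (g x) = 0 by rw [← End.mul_apply, h.eq, End.mul_apply, hx, map_zero]

lemma mapsTo_range_of_commute {f g : End k E} (h : Commute f g) :
    MapsTo g (LinearMap.range f) (LinearMap.range f) := by
  rintro _ ⟨y, rfl⟩
  exact ⟨g y, by rw [← End.mul_apply, h.eq, End.mul_apply]⟩

lemma commute_restrict {f g : End k E} {p : Submodule k E} (hf : MapsTo f p p)
    (hg : MapsTo g p p) (h : Commute f g) : Commute (f.restrict hf) (g.restrict hg) :=
  LinearMap.ext fun x => Subtype.ext (LinearMap.congr_fun h.eq x)

lemma eq_zero_of_forall_restrict_apply_eq_zero {D : ι → End k E} {p : Submodule k E}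
    (hp : ∀ i, MapsTo (D i) p p) (hker : ∀ v, (∀ i, D i v = 0) → v = 0) (v : p)
    (hv : ∀ i, (D i).restrict (hp i) v = 0) : v = 0 :=
  Subtype.ext (hker v fun i => congrArg Subtype.val (hv i))

lemma ker_ne_bot_of_isNilpotent [Nontrivial E] {f : End k E} (hf : IsNilpotent f) :
    ker f ≠ ⊥ := by
  intro hker
  obtain ⟨n, hn⟩ := hf
  obtain ⟨v, hv⟩ := exists_ne (0 : E)
  have hinj : Function.Injective (f ^ n) := by
    rw [End.coe_pow]; exact (ker_eq_bot.1 hker).iterate n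
  exact hv (hinj (by rw [hn, LinearMap.zero_apply, map_zero]))

lemma injective_restrict_range_pow {f : End k E} {m : ℕ} (hm : m ≠ 0)
    (hdisj : Disjoint (ker (f ^ m)) (LinearMap.range (f ^ m)))
    (hf : MapsTo f (LinearMap.range (f ^ m)) (LinearMap.range (f ^ m))) :
    Function.Injective (f.restrict hf) := by
  rw [← ker_eq_bot, ker_eq_bot']
  rintro ⟨x, hx⟩ hx0
  have hfx : f x = 0 := congrArg Subtype.val hx0
  obtain ⟨m', rfl⟩ := Nat.exists_eq_succ_of_ne_zero hm
  have hx' : x ∈ ker (f ^ (m' + 1)) := by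
    rw [mem_ker, pow_succ, End.mul_apply, hfx, map_zero]
  exact Subtype.ext (Submodule.disjoint_def.1 hdisj x hx' hx)

def IsKoszulCocycle (D : ι → End k E) (a : ι → E) : Prop :=
  ∀ i j, D i (a j) = D j (a i)

def IsKoszulCoboundary (D : ι → End k E) (a : ι → E) : Prop :=
  ∃ x, ∀ i, a i = D i x

variable {D : ι → End k E} {a : ι → E}

lemma IsKoszulCocycle.isKoszulCoboundary_of_bijective (ha : IsKoszulCocycle D a)
    {i₀ : ι} (hD : ∀ j, Commute (D j) (D i₀)) (hbij : Function.Bijective (D i₀)) :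
    IsKoszulCoboundary D a := by
  obtain ⟨x, hx⟩ := hbij.2 (a i₀)
  refine ⟨x, fun j => hbij.1 ?_⟩
  rw [ha, ← hx, ← End.mul_apply, ← End.mul_apply, (hD j).eq]

lemma IsKoszulCocycle.exists_projection_eq {p q : Submodule k E} (ha : IsKoszulCocycle D a)
    (hpq : IsCompl p q) (hp : ∀ i, MapsTo (D i) p p) (hq : ∀ i, MapsTo (D i) q q)
    (H : ∀ b, IsKoszulCocycle (fun i => (D i).restrict (hp i)) b →
      IsKoszulCoboundary (fun i => (D i).restrict (hp i)) b) :
    ∃ x : E, ∀ i, p.projection q hpq (a i) = D i x := by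
  have hcomm : ∀ i, Commute (p.projection q hpq) (D i) := fun i =>
    (Submodule.isIdempotentElem_projection hpq).commute_iff.2
      ⟨by simpa [End.mem_invtSubmodule_iff_mapsTo] using hp i,
        by simpa [End.mem_invtSubmodule_iff_mapsTo] using hq i⟩
  obtain ⟨x, hx⟩ := H (fun i => p.projectionOnto q hpq (a i)) fun i j => Subtype.ext <| by
    change D i (p.projection q hpq (a j)) = D j (p.projection q hpq (a i))
    rw [← End.mul_apply, ← (hcomm i).eq, End.mul_apply, ha, ← End.mul_apply, (hcomm j).eq,
      End.mul_apply]
  exact ⟨x, fun i => congrArg Subtype.val (hx i)⟩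

lemma IsKoszulCocycle.isKoszulCoboundary_of_isCompl {p q : Submodule k E} (ha : IsKoszulCocycle D a)
    (hpq : IsCompl p q) (hp : ∀ i, MapsTo (D i) p p) (hq : ∀ i, MapsTo (D i) q q)
    (Hp : ∀ b, IsKoszulCocycle (fun i => (D i).restrict (hp i)) b →
      IsKoszulCoboundary (fun i => (D i).restrict (hp i)) b)
    (Hq : ∀ b, IsKoszulCocycle (fun i => (D i).restrict (hq i)) b →
      IsKoszulCoboundary (fun i => (D i).restrict (hq i)) b) :
    IsKoszulCoboundary D a := by
  obtain ⟨x, hx⟩ := ha.exists_projection_eq hpq hp hq Hp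
  obtain ⟨y, hy⟩ := ha.exists_projection_eq hpq.symm hq hp Hq
  refine ⟨x + y, fun i => ?_⟩
  rw [map_add, ← hx, ← hy, Submodule.projection_add_projection_eq_self]

end Ring

section DivisionRing

variable {k E ι : Type*} [DivisionRing k] [AddCommGroup E] [Module k E]

theorem exists_ne_zero_forall_eq_zero_of_isNilpotent [FiniteDimensional k E] [Nontrivial E]
    {D : ι → End k E} (hD : ∀ i j, Commute (D i) (D j)) (hnil : ∀ i, IsNilpotent (D i)) :
    ∃ v ≠ 0, ∀ i, D i v = 0 := by
  induction h : finrank k E using Nat.strong_induction_on generalizing E with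
  | _ n ih =>
  by_cases hzero : ∀ i, D i = 0
  · obtain ⟨v, hv⟩ := exists_ne (0 : E)
    exact ⟨v, hv, fun i => by rw [hzero i, LinearMap.zero_apply]⟩
  obtain ⟨i₀, hi₀⟩ := not_forall.1 hzero
  have hK : ∀ i, MapsTo (D i) (ker (D i₀)) (ker (D i₀)) :=
    fun i => mapsTo_ker_of_commute (hD i₀ i)
  have : Nontrivial (ker (D i₀)) :=
    Submodule.nontrivial_iff_ne_bot.2 (ker_ne_bot_of_isNilpotent (hnil i₀))
  have hlt : finrank k (ker (D i₀)) < n := h ▸ Submodule.finrank_lt (by rwa [Ne, ker_eq_top])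
  obtain ⟨v, hv, hDv⟩ := ih _ hlt (fun i j => commute_restrict (hK i) (hK j) (hD i j))
    (fun i => End.isNilpotent.restrict (hK i) (hnil i)) rfl
  exact ⟨v, by simpa using hv, fun i => congrArg Subtype.val (hDv i)⟩

theorem IsKoszulCocycle.isKoszulCoboundary [FiniteDimensional k E] {D : ι → End k E}
    {a : ι → E} (ha : IsKoszulCocycle D a)
    (hD : ∀ i j, Commute (D i) (D j)) (hker : ∀ v, (∀ i, D i v = 0) → v = 0) :
    IsKoszulCoboundary D a := by
  induction h : finrank k E using Nat.strong_induction_on generalizing E with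
  | _ n ih =>
  by_cases hnil : ∀ i, IsNilpotent (D i)
  · have : Subsingleton E := not_nontrivial_iff_subsingleton.1 fun _ => by
      obtain ⟨v, hv, hDv⟩ := exists_ne_zero_forall_eq_zero_of_isNilpotent hD hnil
      exact hv (hker v hDv)
    exact ⟨0, fun i => Subsingleton.elim _ _⟩
  obtain ⟨i₀, hi₀⟩ := not_forall.1 hnil
  obtain ⟨m, hm, hfit⟩ :
      ∃ m, m ≠ 0 ∧ IsCompl (ker (D i₀ ^ m)) (LinearMap.range (D i₀ ^ m)) :=
    ((Filter.eventually_ne_atTop 0).and (D i₀).eventually_isCompl_ker_pow_range_pow).exists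
  have hK : ∀ i, MapsTo (D i) (ker (D i₀ ^ m)) (ker (D i₀ ^ m)) :=
    fun i => mapsTo_ker_of_commute ((hD i₀ i).pow_left m)
  have hI : ∀ i, MapsTo (D i) (LinearMap.range (D i₀ ^ m)) (LinearMap.range (D i₀ ^ m)) :=
    fun i => mapsTo_range_of_commute ((hD i₀ i).pow_left m)
  refine ha.isKoszulCoboundary_of_isCompl hfit hK hI (fun b hb => ?_) (fun b hb => ?_)
  · have hlt : finrank k (ker (D i₀ ^ m)) < n := h ▸ Submodule.finrank_lt
      (by rw [Ne, ker_eq_top]; exact fun h0 => hi₀ ⟨m, h0⟩)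
    exact ih _ hlt hb (fun i j => commute_restrict (hK i) (hK j) (hD i j))
      (eq_zero_of_forall_restrict_apply_eq_zero hK hker) rfl
  · have hinj := injective_restrict_range_pow hm hfit.disjoint (hI i₀)
    exact hb.isKoszulCoboundary_of_bijective
      (fun j => commute_restrict (hI j) (hI i₀) (hD j i₀))
      ⟨hinj, injective_iff_surjective.1 hinj⟩

end DivisionRing

theorem stmt4_general (G : Type*) [AddCommGroup G]
    (E : Type*) [AddCommGroup E] [Module ℝ E] [FiniteDimensional ℝ E]
    (A : G → (E ≃ₗ[ℝ] E))
    (hA : ∀ g h x, A (g + h) x = A g (A h x))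
    (hfix : ∀ v : E, (∀ g, A g v = v) → v = 0)
    (α : G → E)
    (hα : ∀ g h, α (g + h) = α g + A g (α h)) :
    ∃ x₀ : E, ∀ g, α g = x₀ - A g x₀ := by
  let D : G → End ℝ E := fun g => 1 - (A g : End ℝ E)
  have hAcomm : ∀ g h, Commute (A g : End ℝ E) (A h) := fun g h => LinearMap.ext fun x => by
    simp only [End.mul_apply, LinearEquiv.coe_coe]
    rw [← hA, ← hA, add_comm]
  have hD : ∀ g h, Commute (D g) (D h) := fun g h =>
    (Commute.one_right _).sub_right ((Commute.one_left _).sub_left (hAcomm g h))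
  have hker : ∀ v, (∀ g, D g v = 0) → v = 0 := fun v hv =>
    hfix v fun g => (sub_eq_zero.1 (hv g)).symm
  have hcocycle : IsKoszulCocycle D α := fun g h => by
    have hswap : α g + A g (α h) = α h + A h (α g) := by rw [← hα, ← hα, add_comm]
    simp only [D, LinearMap.sub_apply, End.one_apply, LinearEquiv.coe_coe]
    rw [sub_eq_sub_iff_add_eq_add, hswap]
  exact hcocycle.isKoszulCoboundary hD hker

/-- Hirsch, degree 1: If a finitely generated abelian group `G` acts
linearly on a finite-dimensional real vector space `E` with trivial fixed space, then every
1-cocycle `α : G → E` is a coboundary. -/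
theorem stmt4 (G : Type*) [AddCommGroup G] [AddGroup.FG G]
    (E : Type*) [AddCommGroup E] [Module ℝ E] [FiniteDimensional ℝ E]
    (A : G → (E ≃ₗ[ℝ] E))
    (hA : ∀ g h x, A (g + h) x = A g (A h x))
    (hfix : ∀ v : E, (∀ g, A g v = v) → v = 0)
    (α : G → E)
    (hα : ∀ g h, α (g + h) = α g + A g (α h)) :
    ∃ x₀ : E, ∀ g, α g = x₀ - A g x₀ :=
  stmt4_general G E A hA hfix α hα
end

section
/- Let A₁ be a unipotent ℤ^p-action on ℚ^{q₁} and A₂ a ℤ^p-action on ℚ^{q₂} such that 0 is the only vector fixed by all A₂(ℓ). Let V : ℤ^p → Hom(ℚ^{q₁},ℚ^{q₂}) satisfy V(ℓ+ℓ') = V(ℓ)∘A₁(ℓ') + A₂(ℓ)∘V(ℓ'). Then there exists W₀ ∈ Hom(ℚ^{q₁},ℚ^{q₂}) such that V(ℓ) = W₀∘A₁(ℓ) − A₂(ℓ)∘W₀ for all ℓ ∈ ℤ^p. -/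
/-!
The maps `W ↦ W ∘ A₁ ℓ` and `W ↦ A₂ ℓ ∘ W` on `Hom(X, Y)` commute, so they generate a commutative
finite-dimensional, hence Artinian, algebra `S` acting faithfully on `Hom(X, Y)`. Since a maximal
ideal of an Artinian ring is annihilated by a nonzero element, elements of `S` that kill no nonzero
`W` simultaneously generate the unit ideal; this applies to the `1 - (A₂ ℓ ∘ ·)`, as the `A₂ ℓ`
have no common nonzero fixed vector. The coboundary operators `D ℓ = (· ∘ A₁ ℓ) - (A₂ ℓ ∘ ·)`
differ from these by the nilpotents `1 - (· ∘ A₁ ℓ)`, so `∑ r ℓ * D ℓ = 1` for some `r ℓ ∈ S`.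
The cocycle identity reads `D ℓ (V ℓ') = D ℓ' (V ℓ)`, hence `W₀ = ∑ r ℓ (V ℓ)` has `D ℓ W₀ = V ℓ`.
-/

open Set

section CommRing

variable {R M ι : Type*}

theorem exists_forall_eq_smul_of_span_range_eq_top [CommSemiring R] [AddCommMonoid M]
    [Module R M] {f : ι → R} (hf : Ideal.span (range f) = ⊤) {c : ι → M}
    (hc : ∀ i j, f i • c j = f j • c i) : ∃ w : M, ∀ i, c i = f i • w := by
  obtain ⟨r, hr⟩ : ∃ r : ι →₀ R, (r.sum fun i a => a • f i) = 1 :=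
    Finsupp.mem_span_range_iff_exists_finsupp.mp (by rw [← Ideal.span, hf]; trivial)
  refine ⟨r.sum fun i a => a • c i, fun j => ?_⟩
  calc c j = (r.sum fun i a => a • f i) • c j := by rw [hr, one_smul]
    _ = r.sum fun i a => a • f i • c j := by simp only [Finsupp.sum, Finset.sum_smul, smul_assoc]
    _ = f j • r.sum fun i a => a • c i := by
      rw [Finsupp.sum, Finsupp.sum, Finset.smul_sum]
      exact Finset.sum_congr rfl fun i _ => by rw [hc, smul_comm]

theorem Ideal.span_range_eq_top_of_forall_smul_eq_zero [CommRing R] [IsArtinianRing R]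
    [AddCommGroup M] [Module R M] [FaithfulSMul R M] {f : ι → R}
    (hf : ∀ v : M, (∀ i, f i • v = 0) → v = 0) : Ideal.span (range f) = ⊤ := by
  by_contra hne
  obtain ⟨m, hm, hle⟩ := Ideal.exists_le_maximal _ hne
  have hzd : Disjoint (m : Set R) (nonZeroDivisors R) := Set.disjoint_left.mpr fun r hr hr0 =>
    hm.ne_top (m.eq_top_of_isUnit_mem hr (IsArtinianRing.isUnit_of_mem_nonZeroDivisors hr0))
  obtain ⟨a, ha, ha0⟩ :=
    SetLike.exists_of_lt (Ideal.bot_lt_annihilator_of_disjoint_nonZeroDivisors hzd)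
  obtain ⟨v, hv⟩ : ∃ v : M, a • v ≠ 0 := by
    by_contra! h
    exact ha0 (FaithfulSMul.eq_of_smul_eq_smul (α := M) fun v => by rw [h v, zero_smul])
  refine hv (hf _ fun i => ?_)
  have hfi : a • f i = 0 :=
    congrArg Subtype.val (Module.mem_annihilator.mp ha ⟨f i, hle (Ideal.subset_span ⟨i, rfl⟩)⟩)
  rw [smul_smul, mul_comm, ← smul_eq_mul, hfi, zero_smul]

theorem Ideal.span_range_eq_top_of_isNilpotent_sub [CommRing R] {f g : ι → R}
    (hf : Ideal.span (range f) = ⊤) (hfg : ∀ i, IsNilpotent (f i - g i)) :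
    Ideal.span (range g) = ⊤ := by
  by_contra hne
  obtain ⟨m, hm, hle⟩ := Ideal.exists_le_maximal _ hne
  refine hm.ne_top (top_le_iff.mp (hf ▸ Ideal.span_le.mpr ?_))
  rintro _ ⟨i, rfl⟩
  have := m.add_mem (nilradical_le_prime m (mem_nilradical.mpr (hfg i)))
    (hle (Ideal.subset_span ⟨i, rfl⟩))
  rwa [sub_add_cancel] at this

end CommRing

theorem isNilpotent_lcomp_sub_one {K X Y : Type*} [CommRing K] [AddCommGroup X] [Module K X]
    [AddCommGroup Y] [Module K Y] {f : Module.End K X} (hf : IsNilpotent (f - 1)) :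
    IsNilpotent (LinearMap.lcomp K Y f - 1) := by
  obtain ⟨k, hk⟩ := hf
  have hpow : ∀ n (W : X →ₗ[K] Y), ((LinearMap.lcomp K Y f - 1) ^ n) W = W ∘ₗ (f - 1) ^ n := by
    intro n W
    induction n with
    | zero => rfl
    | succ n ih =>
      rw [pow_succ', Module.End.mul_apply, ih, pow_succ, Module.End.mul_eq_comp]
      ext x
      simp
  exact ⟨k, LinearMap.ext fun W => by rw [hpow, hk, LinearMap.comp_zero]; rfl⟩

open scoped IsMulCommutative in
theorem exists_forall_eq_comp_sub_comp_of_isNilpotent {K X Y G : Type*} [Field K]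
    [AddCommGroup X] [Module K X] [FiniteDimensional K X]
    [AddCommGroup Y] [Module K Y] [FiniteDimensional K Y] [AddCommMagma G]
    (A₁ : G → Module.End K X) (A₂ : G → Module.End K Y)
    (hA₁ : ∀ ℓ ℓ', Commute (A₁ ℓ) (A₁ ℓ')) (hA₂ : ∀ ℓ ℓ', Commute (A₂ ℓ) (A₂ ℓ'))
    (huni : ∀ ℓ, IsNilpotent (A₁ ℓ - 1)) (hfix : ∀ v : Y, (∀ ℓ, A₂ ℓ v = v) → v = 0)
    (V : G → X →ₗ[K] Y) (hV : ∀ ℓ ℓ', V (ℓ + ℓ') = V ℓ ∘ₗ A₁ ℓ' + A₂ ℓ ∘ₗ V ℓ') :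
    ∃ W₀ : X →ₗ[K] Y, ∀ ℓ, V ℓ = W₀ ∘ₗ A₁ ℓ - A₂ ℓ ∘ₗ W₀ := by
  let pre (ℓ : G) : Module.End K (X →ₗ[K] Y) := LinearMap.lcomp K Y (A₁ ℓ)
  let post (ℓ : G) : Module.End K (X →ₗ[K] Y) := LinearMap.llcomp K X Y Y (A₂ ℓ)
  let S := Algebra.adjoin K (range pre ∪ range post)
  have hpre (ℓ : G) : pre ℓ ∈ S := Algebra.subset_adjoin (Or.inl ⟨ℓ, rfl⟩)
  have hpost (ℓ : G) : post ℓ ∈ S := Algebra.subset_adjoin (Or.inr ⟨ℓ, rfl⟩)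
  have : IsMulCommutative S := Algebra.isMulCommutative_adjoin K <| by
    rintro _ (⟨ℓ, rfl⟩ | ⟨ℓ, rfl⟩) _ (⟨ℓ', rfl⟩ | ⟨ℓ', rfl⟩) <;> ext W x
    · simpa [pre] using congrArg W (LinearMap.congr_fun (hA₁ ℓ' ℓ).eq x)
    · rfl
    · rfl
    · simpa [post] using LinearMap.congr_fun (hA₂ ℓ ℓ').eq (W x)
  have : IsArtinianRing S := IsArtinianRing.of_finite K S
  let D (ℓ : G) : S := ⟨pre ℓ - post ℓ, sub_mem (hpre ℓ) (hpost ℓ)⟩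
  let E (ℓ : G) : S := ⟨1 - post ℓ, sub_mem (one_mem S) (hpost ℓ)⟩
  have hE : Ideal.span (range E) = ⊤ :=
    Ideal.span_range_eq_top_of_forall_smul_eq_zero (R := S) (M := X →ₗ[K] Y) fun W hW =>
      LinearMap.ext fun x => hfix (W x) fun ℓ => by
        have h : W - A₂ ℓ ∘ₗ W = 0 := hW ℓ
        exact (sub_eq_zero.mp (LinearMap.congr_fun h x)).symm
  have hD : Ideal.span (range D) = ⊤ :=
    Ideal.span_range_eq_top_of_isNilpotent_sub (R := S) hE fun ℓ => by
      have hED : S.val (E ℓ - D ℓ) = -(pre ℓ - 1) := by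
        show (1 - post ℓ) - (pre ℓ - post ℓ) = _
        abel
      rw [← IsNilpotent.map_iff (f := S.val) Subtype.val_injective, hED]
      exact (isNilpotent_lcomp_sub_one (huni ℓ)).neg
  obtain ⟨W₀, hW₀⟩ := exists_forall_eq_smul_of_span_range_eq_top (R := S) hD fun ℓ ℓ' => by
    show V ℓ' ∘ₗ A₁ ℓ - A₂ ℓ ∘ₗ V ℓ' = V ℓ ∘ₗ A₁ ℓ' - A₂ ℓ' ∘ₗ V ℓ
    rw [sub_eq_sub_iff_add_eq_add, ← hV, add_comm, hV]
  exact ⟨W₀, hW₀⟩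

theorem stmt7_general (p q₁ q₂ : ℕ)
    (A₁ : (Fin p → ℤ) → Module.End ℚ (Fin q₁ → ℚ))
    (A₂ : (Fin p → ℤ) → Module.End ℚ (Fin q₂ → ℚ))
    (hA₁ : ∀ ℓ ℓ', A₁ (ℓ + ℓ') = A₁ ℓ * A₁ ℓ')
    (hA₂ : ∀ ℓ ℓ', A₂ (ℓ + ℓ') = A₂ ℓ * A₂ ℓ')
    (huni : ∀ ℓ, IsNilpotent (A₁ ℓ - 1))
    (hfix : ∀ v : Fin q₂ → ℚ, (∀ ℓ, A₂ ℓ v = v) → v = 0)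
    (V : (Fin p → ℤ) → ((Fin q₁ → ℚ) →ₗ[ℚ] (Fin q₂ → ℚ)))
    (hV : ∀ ℓ ℓ', V (ℓ + ℓ') = V ℓ ∘ₗ (A₁ ℓ' : (Fin q₁ → ℚ) →ₗ[ℚ] (Fin q₁ → ℚ))
        + (A₂ ℓ : (Fin q₂ → ℚ) →ₗ[ℚ] (Fin q₂ → ℚ)) ∘ₗ V ℓ') :
    ∃ W₀ : (Fin q₁ → ℚ) →ₗ[ℚ] (Fin q₂ → ℚ),
      ∀ ℓ, V ℓ = W₀ ∘ₗ (A₁ ℓ : (Fin q₁ → ℚ) →ₗ[ℚ] (Fin q₁ → ℚ))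
        - (A₂ ℓ : (Fin q₂ → ℚ) →ₗ[ℚ] (Fin q₂ → ℚ)) ∘ₗ W₀ := by
  refine exists_forall_eq_comp_sub_comp_of_isNilpotent A₁ A₂ (fun ℓ ℓ' => ?_) (fun ℓ ℓ' => ?_)
    huni hfix V hV
  · rw [Commute, SemiconjBy, ← hA₁, ← hA₁, add_comm]
  · rw [Commute, SemiconjBy, ← hA₂, ← hA₂, add_comm]

/-- If `A₁` is a unipotent `ℤ^p`-action on `ℚ^{q₁}`, `A₂` a `ℤ^p`-action on
`ℚ^{q₂}` whose only common fixed vector is `0`, and `V` a 1-cocycle over `(A₁, A₂)`, then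
`V` is a coboundary: there is `W₀` with `V(ℓ) = W₀∘A₁(ℓ) − A₂(ℓ)∘W₀` for all `ℓ`. -/
theorem stmt7 (p q₁ q₂ : ℕ)
    (A₁ : (Fin p → ℤ) → Module.End ℚ (Fin q₁ → ℚ))
    (A₂ : (Fin p → ℤ) → Module.End ℚ (Fin q₂ → ℚ))
    (hA₁ : ∀ ℓ ℓ', A₁ (ℓ + ℓ') = A₁ ℓ * A₁ ℓ') (hA₁0 : A₁ 0 = 1)
    (hA₂ : ∀ ℓ ℓ', A₂ (ℓ + ℓ') = A₂ ℓ * A₂ ℓ') (hA₂0 : A₂ 0 = 1)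
    (huni : ∀ ℓ, IsNilpotent (A₁ ℓ - 1))
    (hfix : ∀ v : Fin q₂ → ℚ, (∀ ℓ, A₂ ℓ v = v) → v = 0)
    (V : (Fin p → ℤ) → ((Fin q₁ → ℚ) →ₗ[ℚ] (Fin q₂ → ℚ)))
    (hV : ∀ ℓ ℓ', V (ℓ + ℓ') = V ℓ ∘ₗ (A₁ ℓ' : (Fin q₁ → ℚ) →ₗ[ℚ] (Fin q₁ → ℚ))
        + (A₂ ℓ : (Fin q₂ → ℚ) →ₗ[ℚ] (Fin q₂ → ℚ)) ∘ₗ V ℓ') :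
    ∃ W₀ : (Fin q₁ → ℚ) →ₗ[ℚ] (Fin q₂ → ℚ),
      ∀ ℓ, V ℓ = W₀ ∘ₗ (A₁ ℓ : (Fin q₁ → ℚ) →ₗ[ℚ] (Fin q₁ → ℚ))
        - (A₂ ℓ : (Fin q₂ → ℚ) →ₗ[ℚ] (Fin q₂ → ℚ)) ∘ₗ W₀ :=
  stmt7_general p q₁ q₂ A₁ A₂ hA₁ hA₂ huni hfix V hV
end

section
/- Let V : ℤ^p → Hom(ℝ^n, ℝ^n) be additive, α : ℤ^p → ℝ^n satisfy V(ℓ)(α(ℓ')) = V(ℓ')(α(ℓ)), and suppose V(ℓ₀) is invertible and there exist ℓ₁, ℓ₂ such that the 'star-commutator' V(ℓ₁)V(ℓ₀)^{-1}V(ℓ₂) − V(ℓ₂)V(ℓ₀)^{-1}V(ℓ₁) is invertible. Then α(ℓ₀) = 0. -/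
/-- With `V` additive, `α` symmetric as below, `V(ℓ₀)` invertible, and the
star-commutator `V(ℓ₁)V(ℓ₀)⁻¹V(ℓ₂) − V(ℓ₂)V(ℓ₀)⁻¹V(ℓ₁)` invertible, one has `α(ℓ₀) = 0`. -/
theorem stmt9 (p n : ℕ)
    (V : (Fin p → ℤ) → Module.End ℝ (Fin n → ℝ))
    (hV : ∀ ℓ ℓ', V (ℓ + ℓ') = V ℓ + V ℓ')
    (α : (Fin p → ℤ) → (Fin n → ℝ))
    (hsym : ∀ ℓ ℓ', V ℓ (α ℓ') = V ℓ' (α ℓ))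
    (ℓ₀ ℓ₁ ℓ₂ : Fin p → ℤ) (hu : IsUnit (V ℓ₀))
    (hc : IsUnit (V ℓ₁ * (↑hu.unit⁻¹ : Module.End ℝ (Fin n → ℝ)) * V ℓ₂
        - V ℓ₂ * (↑hu.unit⁻¹ : Module.End ℝ (Fin n → ℝ)) * V ℓ₁)) :
    α ℓ₀ = 0 := by
  set W : Module.End ℝ (Fin n → ℝ) := (↑hu.unit⁻¹ : Module.End ℝ (Fin n → ℝ)) with hWdef
  have hWV : W * V ℓ₀ = 1 := by
    have := hu.unit.inv_mul
    simpa [hWdef, IsUnit.unit_spec] using congrArg (Units.val) this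
  have hW : ∀ x, W (V ℓ₀ x) = x := by
    intro x
    have : (W * V ℓ₀) x = (1 : Module.End ℝ (Fin n → ℝ)) x := by rw [hWV]
    simpa [Module.End.mul_apply] using this
  have key : (V ℓ₁ * W * V ℓ₂ - V ℓ₂ * W * V ℓ₁) (α ℓ₀) = 0 := by
    have h2 : V ℓ₂ (α ℓ₀) = V ℓ₀ (α ℓ₂) := hsym ℓ₂ ℓ₀
    have h1 : V ℓ₁ (α ℓ₀) = V ℓ₀ (α ℓ₁) := hsym ℓ₁ ℓ₀
    simp only [LinearMap.sub_apply, Module.End.mul_apply]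
    rw [h2, h1, hW, hW, hsym ℓ₁ ℓ₂, sub_self]
  obtain ⟨B, hB⟩ : ∃ B, B * (V ℓ₁ * W * V ℓ₂ - V ℓ₂ * W * V ℓ₁) = 1 :=
    ⟨↑hc.unit⁻¹, by simpa using congrArg (Units.val) hc.unit.inv_mul⟩
  calc α ℓ₀ = (B * (V ℓ₁ * W * V ℓ₂ - V ℓ₂ * W * V ℓ₁)) (α ℓ₀) := by
        rw [hB]; rfl
    _ = B ((V ℓ₁ * W * V ℓ₂ - V ℓ₂ * W * V ℓ₁) (α ℓ₀)) := rfl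
    _ = 0 := by rw [key]; exact map_zero B
end

section
/- Let U(ℓ)(x,y) = (x, y + V(ℓ)x) be a unipotent ℤ^p-action on ℤ^{q-k} × ℤ^k where V : ℤ^p → Hom(ℤ^{q-k}, ℤ^k) is additive, and suppose for every ℓ ∈ ℤ^p the real rank of V(ℓ) : ℝ^{q-k} → ℝ^k is less than k. Choose a k×p real matrix (α_{ij}) whose entries are linearly independent over ℚ together with 1 (so that ⟨m, α(ℓ)⟩ ∉ ℤ for all m ∈ ℤ^k∖{0}, ℓ ∈ ℤ^p∖{0}, where α(ℓ) = (α_{ij})·ℓ). Then the affine ℤ^p-action φ(ℓ)(x,y) = (x, y + V(ℓ)x + α(ℓ)) on the torus T^q = ℝ^q/ℤ^q is free: φ(ℓ) has no fixed point in T^q for ℓ ≠ 0. -/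
open Matrix

/-!
Since the rows of an integer matrix stay linearly independent over `ℝ` when they are over `ℤ`,
a real rank defect of `V ℓ` yields a nonzero integer vector `w` with `w V(ℓ) = 0`. Pairing the
fixed-point equation `V(ℓ) x + α(ℓ) = N` with `w` then gives `⟨w, α(ℓ)⟩ = ⟨w, N⟩ ∈ ℤ`.
-/

theorem Matrix.exists_ne_zero_vecMul_eq_zero_of_rank_map_lt {m n R K : Type*} [Fintype m]
    [Fintype n] [CommRing R] [Field K] [Algebra R K] [FaithfulSMul R K] (A : Matrix m n R)
    (h : (A.map (algebraMap R K)).rank < Fintype.card m) :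
    ∃ w : m → R, w ≠ 0 ∧ w ᵥ* A = 0 := by
  have hdep : ¬ LinearIndependent R A.row := by
    rw [← linearIndependent_algebraMap_comp_iff (S := K)]
    exact fun hind => h.ne (LinearIndependent.rank_matrix (M := A.map (algebraMap R K)) hind)
  obtain ⟨w, hw, i, hi⟩ := Fintype.not_linearIndependent_iff.mp hdep
  refine ⟨w, fun h0 => hi (congrFun h0 i), ?_⟩
  ext j
  simpa [vecMul, dotProduct, mul_comm] using congrFun hw j

theorem Matrix.intCast_dotProduct_eq_of_mulVec_add_eq {m n R : Type*} [Fintype m] [Fintype n]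
    [CommRing R] {A : Matrix m n ℤ} {w : m → ℤ} (hw : w ᵥ* A = 0) {x : n → R} {b : m → R}
    {N : m → ℤ} (h : A.map (Int.cast : ℤ → R) *ᵥ x + b = fun i => (N i : R)) :
    (fun i => (w i : R)) ⬝ᵥ b = ((w ⬝ᵥ N : ℤ) : R) := by
  have hwR : (fun i => (w i : R)) ᵥ* A.map (Int.cast : ℤ → R) = 0 := by
    ext j
    simpa [vecMul, dotProduct] using congrArg (Int.cast : ℤ → R) (congrFun hw j)
  have := congrArg ((fun i => (w i : R)) ⬝ᵥ ·) h
  simp only [dotProduct_add, dotProduct_mulVec, hwR, zero_dotProduct, zero_add] at this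
  rw [this]
  push_cast [dotProduct]
  rfl

theorem stmt10_general (p k m : ℕ)
    (V : (Fin p → ℤ) → Matrix (Fin k) (Fin m) ℤ)
    (hrank : ∀ ℓ, ((V ℓ).map (Int.cast : ℤ → ℝ)).rank < k)
    (α : (Fin p → ℤ) → (Fin k → ℝ))
    (hirr : ∀ mv : Fin k → ℤ, mv ≠ 0 → ∀ ℓ : Fin p → ℤ, ℓ ≠ 0 →
      ¬ ∃ z : ℤ, (∑ i, (mv i : ℝ) * α ℓ i) = (z : ℝ)) :
    ∀ ℓ : Fin p → ℤ, ℓ ≠ 0 → ∀ (x : Fin m → ℝ) (y : Fin k → ℝ),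
      ¬ ∃ (N₁ : Fin m → ℤ) (N₂ : Fin k → ℤ),
        (x, y + ((V ℓ).map (Int.cast : ℤ → ℝ)).mulVec x + α ℓ)
          = (x + fun i => ((N₁ i : ℤ) : ℝ), y + fun i => ((N₂ i : ℤ) : ℝ)) := by
  rintro ℓ hℓ x y ⟨_, N₂, hfixed⟩
  obtain ⟨w, hw0, hw⟩ := (V ℓ).exists_ne_zero_vecMul_eq_zero_of_rank_map_lt (K := ℝ)
    (by simpa using hrank ℓ)
  have hfix : (V ℓ).map (Int.cast : ℤ → ℝ) *ᵥ x + α ℓ = fun i => (N₂ i : ℝ) :=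
    add_left_cancel (by simpa only [add_assoc] using congrArg Prod.snd hfixed)
  exact hirr w hw0 ℓ hℓ ⟨w ⬝ᵥ N₂, intCast_dotProduct_eq_of_mulVec_add_eq hw hfix⟩

/-- Let `U(ℓ)(x,y) = (x, y + V(ℓ)x)` be a unipotent `ℤ^p`-action on
`ℤ^m × ℤ^k` (`m = q - k`), with `V` additive and each `V(ℓ)` of real rank `< k`.
If `α(ℓ) = (α_{ij})·ℓ` with `⟨m, α(ℓ)⟩ ∉ ℤ` for all `m ∈ ℤ^k∖{0}`, `ℓ ∈ ℤ^p∖{0}`,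
then the affine action `φ(ℓ)(x,y) = (x, y + V(ℓ)x + α(ℓ))` on `T^q = ℝ^q/ℤ^q` is free:
no point lifts to a fixed point modulo `ℤ^q` for `ℓ ≠ 0`. -/
theorem stmt10 (p k m : ℕ)
    (V : (Fin p → ℤ) → Matrix (Fin k) (Fin m) ℤ)
    (hV : ∀ ℓ ℓ', V (ℓ + ℓ') = V ℓ + V ℓ')
    (hrank : ∀ ℓ, ((V ℓ).map (Int.cast : ℤ → ℝ)).rank < k)
    (a : Matrix (Fin k) (Fin p) ℝ)
    (α : (Fin p → ℤ) → (Fin k → ℝ))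
    (hα : ∀ ℓ, α ℓ = a.mulVec fun j => (ℓ j : ℝ))
    (hirr : ∀ mv : Fin k → ℤ, mv ≠ 0 → ∀ ℓ : Fin p → ℤ, ℓ ≠ 0 →
      ¬ ∃ z : ℤ, (∑ i, (mv i : ℝ) * α ℓ i) = (z : ℝ)) :
    ∀ ℓ : Fin p → ℤ, ℓ ≠ 0 → ∀ (x : Fin m → ℝ) (y : Fin k → ℝ),
      ¬ ∃ (N₁ : Fin m → ℤ) (N₂ : Fin k → ℤ),
        (x, y + ((V ℓ).map (Int.cast : ℤ → ℝ)).mulVec x + α ℓ)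
          = (x + fun i => ((N₁ i : ℤ) : ℝ), y + fun i => ((N₂ i : ℤ) : ℝ)) :=
  stmt10_general p k m V hrank α hirr
end

section
/- Let U be a unipotent ℤ^p-action on ℤ^q (each U(ℓ) a unipotent automorphism) and let k = dim(fix U ⊗ ℚ) where fix U = {v ∈ ℤ^q : U(ℓ)v = v for all ℓ}. If 2k > q, then U is the linear part of a free affine ℤ^p-action on T^q. -/
open MeasureTheory Module

private noncomputable def stmt11L {p k q : ℕ} (b : Fin k → (Fin q → ℝ)) (ℓ : Fin p → ℤ) :
    (Fin p → Fin k → ℝ) →ₗ[ℝ] (Fin q → ℝ) where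
  toFun c := ∑ i, ∑ j, ((ℓ i : ℝ) * c i j) • b j
  map_add' c d := by
    simp [mul_add, add_smul, Finset.sum_add_distrib]
  map_smul' r c := by
    simp [Finset.smul_sum, smul_smul, mul_left_comm]

/-- A unipotent `ℤ^p`-action `U` on `ℤ^q` whose fixed subspace has dimension
`k` with `2k > q` is the linear part of a free affine `ℤ^p`-action on `T^q = ℝ^q/ℤ^q`:
there is a translation part `α : ℤ^p → ℝ^q` which is a 1-cocycle over `U` modulo `ℤ^q`
such that `x ↦ U(ℓ)x + α(ℓ)` has no fixed point on the torus for `ℓ ≠ 0`. -/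
theorem stmt11 (p q : ℕ)
    (U : (Fin p → ℤ) → Matrix (Fin q) (Fin q) ℤ)
    (hhom : ∀ ℓ ℓ', U (ℓ + ℓ') = U ℓ * U ℓ')
    (h0 : U 0 = 1)
    (huni : ∀ ℓ, IsNilpotent (U ℓ - 1))
    (hk : 2 * Module.finrank ℝ ↥
        (⨅ ℓ : Fin p → ℤ, LinearMap.eqLocus
          (Matrix.mulVecLin ((U ℓ).map (Int.cast : ℤ → ℝ))) LinearMap.id) > q) :
    ∃ α : (Fin p → ℤ) → (Fin q → ℝ),
      (∀ ℓ ℓ', ∃ N : Fin q → ℤ,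
        α (ℓ + ℓ') = α ℓ + ((U ℓ).map (Int.cast : ℤ → ℝ)).mulVec (α ℓ')
          + fun i => ((N i : ℤ) : ℝ)) ∧
      (∀ ℓ : Fin p → ℤ, ℓ ≠ 0 → ∀ x : Fin q → ℝ,
        ¬ ∃ N : Fin q → ℤ,
          ((U ℓ).map (Int.cast : ℤ → ℝ)).mulVec x + α ℓ = x + fun i => ((N i : ℤ) : ℝ)) := by
  classical
  set F : Submodule ℝ (Fin q → ℝ) := ⨅ ℓ : Fin p → ℤ, LinearMap.eqLocus
      (Matrix.mulVecLin ((U ℓ).map (Int.cast : ℤ → ℝ))) LinearMap.id with hFdef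
  set k : ℕ := Module.finrank ℝ F with hkdef
  -- membership in F means fixed by every U ℓ
  have hFfix : ∀ v ∈ F, ∀ ℓ, ((U ℓ).map (Int.cast : ℤ → ℝ)).mulVec v = v := by
    intro v hv ℓ
    have := (Submodule.mem_iInf _).1 hv ℓ
    simpa [LinearMap.eqLocus, Matrix.mulVecLin_apply] using this
  -- the range of (U ℓ) - 1 has small rank
  set R : (Fin p → ℤ) → Submodule ℝ (Fin q → ℝ) := fun ℓ =>
    LinearMap.range (Matrix.mulVecLin ((U ℓ).map (Int.cast : ℤ → ℝ)) - LinearMap.id) with hRdef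
  have hRrank : ∀ ℓ, Module.finrank ℝ (R ℓ) < k := by
    intro ℓ
    have hker : F ≤ LinearMap.ker
        (Matrix.mulVecLin ((U ℓ).map (Int.cast : ℤ → ℝ)) - LinearMap.id) := by
      intro v hv
      simp [LinearMap.mem_ker, Matrix.mulVecLin_apply, hFfix v hv ℓ]
    have h1 := LinearMap.finrank_range_add_finrank_ker
      (Matrix.mulVecLin ((U ℓ).map (Int.cast : ℤ → ℝ)) - LinearMap.id)
    have h2 : k ≤ Module.finrank ℝ (LinearMap.ker
        (Matrix.mulVecLin ((U ℓ).map (Int.cast : ℤ → ℝ)) - LinearMap.id)) :=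
      Submodule.finrank_mono hker
    have h3 : Module.finrank ℝ (Fin q → ℝ) = q := by simp
    have h4 : Module.finrank ℝ (R ℓ) = Module.finrank ℝ (LinearMap.range
        (Matrix.mulVecLin ((U ℓ).map (Int.cast : ℤ → ℝ)) - LinearMap.id)) := by
      rw [hRdef]
    omega
  -- pick w ∈ F not in R ℓ
  have hw : ∀ ℓ, ∃ w ∈ F, w ∉ R ℓ := by
    intro ℓ
    refine SetLike.not_le_iff_exists.1 fun hle => ?_
    have h1 := Submodule.finrank_mono (R := ℝ) (M := Fin q → ℝ) hle
    have h2 := hRrank ℓ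
    omega
  -- basis of F
  set b := Module.finBasis ℝ F with hb
  set bv : Fin k → (Fin q → ℝ) := fun j => (b j : Fin q → ℝ) with hbv
  -- values of the linear maps lie in F
  have hLF : ∀ (ℓ : Fin p → ℤ) (c : Fin p → Fin k → ℝ), stmt11L bv ℓ c ∈ F := by
    intro ℓ c
    have : (∑ i, ∑ j, ((ℓ i : ℝ) * c i j) • bv j) ∈ F :=
      Submodule.sum_mem _ fun i _ =>
        Submodule.sum_mem _ fun j _ => Submodule.smul_mem _ _ (b j).2
    exact this
  -- the bad sets
  set Bad : {ℓ : Fin p → ℤ // ℓ ≠ 0} × (Fin q → ℤ) → Set (Fin p → Fin k → ℝ) := fun s =>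
    {c | stmt11L bv s.1.1 c - (fun i => ((s.2 i : ℤ) : ℝ)) ∈ R s.1.1} with hBad
  -- each bad set misses some point
  have hproper : ∀ s, ∃ c, c ∉ Bad s := by
    rintro ⟨⟨ℓ, hℓ⟩, n⟩
    obtain ⟨i₀, hi₀⟩ := Function.ne_iff.1 hℓ
    obtain ⟨w, hwF, hwR⟩ := hw ℓ
    set d : Fin k → ℝ := fun j => b.repr ⟨w, hwF⟩ j with hd
    have hsum : ∀ t : ℝ, stmt11L bv ℓ
        (fun i j => if i = i₀ then t * d j else 0) = ((ℓ i₀ : ℝ) * t) • w := by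
      intro t
      have hwrepr : (∑ j, d j • bv j) = w := by
        have hsr := b.sum_repr ⟨w, hwF⟩
        calc (∑ j, d j • bv j) = ((∑ j, d j • b j : F) : Fin q → ℝ) := by
              push_cast [hbv]; rfl
          _ = w := by rw [hsr]
      calc stmt11L bv ℓ (fun i j => if i = i₀ then t * d j else 0)
          = ∑ i, ∑ j, ((ℓ i : ℝ) * (if i = i₀ then t * d j else 0)) • bv j := rfl
        _ = ∑ j, ((ℓ i₀ : ℝ) * (t * d j)) • bv j := by
            rw [Finset.sum_eq_single i₀]
            · simp
            · intro i _ hi; simp [hi]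
            · simp
        _ = ((ℓ i₀ : ℝ) * t) • ∑ j, d j • bv j := by
            rw [Finset.smul_sum]
            congr 1; funext j; rw [smul_smul]; ring_nf
        _ = ((ℓ i₀ : ℝ) * t) • w := by rw [hwrepr]
    by_cases h0' : (fun i => ((n i : ℤ) : ℝ)) ∈ R ℓ
    · refine ⟨fun i j => if i = i₀ then 1 * d j else 0, fun hc => ?_⟩
      have hc' : ((ℓ i₀ : ℝ) * 1) • w - (fun i => ((n i : ℤ) : ℝ)) ∈ R ℓ := by
        rw [← hsum 1]; exact hc
      have hmem : ((ℓ i₀ : ℝ)) • w ∈ R ℓ := by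
        have := (R ℓ).add_mem hc' h0'
        simpa using this
      have hne : (ℓ i₀ : ℝ) ≠ 0 := Int.cast_ne_zero.2 hi₀
      exact hwR (by simpa [hne] using (R ℓ).smul_mem ((ℓ i₀ : ℝ))⁻¹ hmem)
    · refine ⟨fun i j => if i = i₀ then 0 * d j else 0, fun hc => ?_⟩
      have hc' : ((ℓ i₀ : ℝ) * 0) • w - (fun i => ((n i : ℤ) : ℝ)) ∈ R ℓ := by
        rw [← hsum 0]; exact hc
      exact h0' (by simpa using (R ℓ).neg_mem hc')
  -- each bad set is null
  have hnull : ∀ s, volume (Bad s) = 0 := by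
    intro s
    rcases Set.eq_empty_or_nonempty (Bad s) with he | ⟨c₀, hc₀⟩
    · simp [he]
    · obtain ⟨c₁, hc₁⟩ := hproper s
      set S : Submodule ℝ (Fin p → Fin k → ℝ) :=
        Submodule.comap (stmt11L bv s.1.1) (R s.1.1) with hS
      have hc₀' : stmt11L bv s.1.1 c₀ - (fun i => ((s.2 i : ℤ) : ℝ)) ∈ R s.1.1 := hc₀
      have hBS : Bad s = (fun c => c + (-c₀)) ⁻¹' (S : Set (Fin p → Fin k → ℝ)) := by
        ext c
        simp only [Set.mem_preimage, SetLike.mem_coe, hS, Submodule.mem_comap, map_add, map_neg]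
        constructor
        · intro hc
          have hmem := (R s.1.1).sub_mem hc hc₀'
          have h2 : (stmt11L bv s.1.1 c - fun i => ((s.2 i : ℤ) : ℝ)) -
              (stmt11L bv s.1.1 c₀ - fun i => ((s.2 i : ℤ) : ℝ)) =
              stmt11L bv s.1.1 c + -stmt11L bv s.1.1 c₀ := by abel
          rw [h2] at hmem
          exact hmem
        · intro hc
          have hmem := (R s.1.1).add_mem hc hc₀'
          have h2 : stmt11L bv s.1.1 c + -stmt11L bv s.1.1 c₀ +
              (stmt11L bv s.1.1 c₀ - fun i => ((s.2 i : ℤ) : ℝ)) =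
              stmt11L bv s.1.1 c - fun i => ((s.2 i : ℤ) : ℝ) := by abel
          rw [h2] at hmem
          exact hmem
      have hSne : S ≠ ⊤ := by
        intro htop
        apply hc₁
        have hmem0 : c₁ - c₀ ∈ S := htop ▸ Submodule.mem_top
        rw [hS, Submodule.mem_comap, map_sub] at hmem0
        have hmem := (R s.1.1).add_mem hmem0 hc₀'
        have h2 : stmt11L bv s.1.1 c₁ - stmt11L bv s.1.1 c₀ +
            (stmt11L bv s.1.1 c₀ - fun i => ((s.2 i : ℤ) : ℝ)) =
            stmt11L bv s.1.1 c₁ - fun i => ((s.2 i : ℤ) : ℝ) := by abel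
        rw [h2] at hmem
        exact hmem
      rw [hBS, measure_preimage_add_right]
      exact Measure.addHaar_submodule volume S hSne
  -- pick a good point
  have hbig : volume (⋃ s, Bad s) = 0 := measure_iUnion_null hnull
  obtain ⟨c, hc⟩ : ∃ c, ∀ s, c ∉ Bad s := by
    have hne : (⋃ s, Bad s) ≠ Set.univ := by
      intro h
      rw [h] at hbig
      exact isOpen_univ.measure_ne_zero volume Set.univ_nonempty hbig
    have : ∃ c, c ∉ ⋃ s, Bad s := by
      by_contra h
      push_neg at h
      exact hne (Set.eq_univ_of_forall h)
    obtain ⟨c, hc⟩ := this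
    exact ⟨c, fun s hs => hc (Set.mem_iUnion.2 ⟨s, hs⟩)⟩
  -- define α
  refine ⟨fun ℓ => stmt11L bv ℓ c, ?_, ?_⟩
  · intro ℓ ℓ'
    refine ⟨0, ?_⟩
    have h1 : ((U ℓ).map (Int.cast : ℤ → ℝ)).mulVec (stmt11L bv ℓ' c) = stmt11L bv ℓ' c :=
      hFfix _ (hLF ℓ' c) ℓ
    have h2 : stmt11L bv (ℓ + ℓ') c = stmt11L bv ℓ c + stmt11L bv ℓ' c := by
      show (∑ i, ∑ j, (((ℓ + ℓ') i : ℝ) * c i j) • bv j) = _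
      have hsplit : ∀ i j, (((ℓ + ℓ') i : ℝ) * c i j) • bv j
          = ((ℓ i : ℝ) * c i j) • bv j + ((ℓ' i : ℝ) * c i j) • bv j := by
        intro i j
        rw [← add_smul]
        congr 1
        push_cast [Pi.add_apply]
        ring
      simp only [hsplit, Finset.sum_add_distrib]
      rfl
    show stmt11L bv (ℓ + ℓ') c = stmt11L bv ℓ c
        + ((U ℓ).map (Int.cast : ℤ → ℝ)).mulVec (stmt11L bv ℓ' c)
        + fun i => (((0 : Fin q → ℤ) i : ℤ) : ℝ)
    rw [h1, h2]
    funext i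
    simp
  · rintro ℓ hℓ x ⟨N, hN⟩
    apply hc ⟨⟨ℓ, hℓ⟩, N⟩
    show stmt11L bv ℓ c - (fun i => ((N i : ℤ) : ℝ)) ∈ R ℓ
    have hN' : ((U ℓ).map (Int.cast : ℤ → ℝ)).mulVec x + stmt11L bv ℓ c
        = x + fun i => ((N i : ℤ) : ℝ) := hN
    refine ⟨-x, ?_⟩
    have h3 : stmt11L bv ℓ c = x + (fun i => ((N i : ℤ) : ℝ))
        - ((U ℓ).map (Int.cast : ℤ → ℝ)).mulVec x :=
      eq_sub_iff_add_eq.mpr (by rw [add_comm]; exact hN')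
    rw [h3]
    simp only [LinearMap.sub_apply, Matrix.mulVecLin_apply, LinearMap.id_apply,
      Matrix.mulVec_neg]
    abel
end

section
/- Every ℤ^p-action A on ℤ² with nonzero fixed-point set is the linear part of a free affine ℤ^p-action on T². -/
/-!
Choose a primitive common fixed vector `w` and complete it to a basis of `ℤ²`. In that basis
`A ℓ = !![1, μ ℓ; 0, ν ℓ]` with `ν ℓ = ±1`, and the homomorphism property says
`μ (ℓ + ℓ') = μ ℓ' + μ ℓ * ν ℓ'`. Let `τ` be transcendental and `t ℓ = ∑ ℓᵢ τ^(i+1)`, so that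
`t ℓ` is irrational for `ℓ ≠ 0`.

* If `ν ≡ 1`, then `μ` is additive and `α ℓ = (τ μ(ℓ)² / 2 + t ℓ, τ μ ℓ)` is a cocycle. A fixed
  point on the torus forces `τ μ ℓ ∈ ℤ`, so `μ ℓ = 0`, and then `t ℓ ∈ ℤ`, so `ℓ = 0`.
* If `ν ℓ₀ = -1`, then `μ` vanishes wherever `ν = 1`, and `α ℓ = (t ℓ, 0)` works: a fixed point
  forces `t ℓ ∈ ℤ` when `ν ℓ = 1` and `2 t ℓ ∈ ℤ` when `ν ℓ = -1`.
-/

open Matrix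

section AffineTorusAction

variable {G n : Type*} [AddMonoid G] [Fintype n]

/-- Cocycles on the nose, not merely modulo `ℤⁿ`. -/
def IsAffineCocycle (A : G → Matrix n n ℤ) (α : G → n → ℝ) : Prop :=
  ∀ g h, α (g + h) = α g + (A g).map (Int.cast : ℤ → ℝ) *ᵥ α h

def IsFreeOnTorus (A : G → Matrix n n ℤ) (α : G → n → ℝ) : Prop :=
  ∀ g, g ≠ 0 → ∀ (x : n → ℝ) (N : n → ℤ),
    (A g).map (Int.cast : ℤ → ℝ) *ᵥ x + α g ≠ x + fun i => (N i : ℝ)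

theorem map_intCast_mul (L M : Matrix n n ℤ) :
    (L * M).map (Int.cast : ℤ → ℝ) = L.map Int.cast * M.map Int.cast := by
  simpa using Matrix.map_mul (L := L) (M := M) (f := Int.castRingHom ℝ)

theorem map_intCast_mulVec (M : Matrix n n ℤ) (N : n → ℤ) :
    M.map (Int.cast : ℤ → ℝ) *ᵥ (fun i => (N i : ℝ)) = fun i => ((M *ᵥ N) i : ℝ) := by
  ext i
  simpa [Function.comp_def] using (RingHom.map_mulVec (Int.castRingHom ℝ) M N i).symm

variable [DecidableEq n] {A : G → Matrix n n ℤ} {α : G → n → ℝ} (P : (Matrix n n ℤ)ˣ)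

theorem IsAffineCocycle.of_units_conj (h : IsAffineCocycle (fun g => P.inv * A g * P.val) α) :
    IsAffineCocycle A (fun g => P.val.map Int.cast *ᵥ α g) := by
  intro g g'
  dsimp only
  have hPA : P.val * (P.inv * A g * P) = A g * P := by
    simp [← Matrix.mul_assoc]
  rw [h g g', mulVec_add, mulVec_mulVec, mulVec_mulVec, ← map_intCast_mul, ← map_intCast_mul, hPA]

theorem IsFreeOnTorus.of_units_conj (h : IsFreeOnTorus (fun g => P.inv * A g * P.val) α) :
    IsFreeOnTorus A (fun g => P.val.map Int.cast *ᵥ α g) := by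
  intro g hg x N hfix
  refine h g hg (P.inv.map Int.cast *ᵥ x) (P.inv *ᵥ N) ?_
  have hQP : P.inv.map (Int.cast : ℤ → ℝ) * P.val.map Int.cast = 1 := by
    simp [← map_intCast_mul]
  have hQA : (P.inv * A g * P) * P.inv = P.inv * A g := by
    simp [Matrix.mul_assoc]
  calc (P.inv * A g * P).map Int.cast *ᵥ (P.inv.map Int.cast *ᵥ x) + α g
      = P.inv.map Int.cast *ᵥ ((A g).map Int.cast *ᵥ x + P.val.map Int.cast *ᵥ α g) := by
        rw [mulVec_add, mulVec_mulVec, mulVec_mulVec, mulVec_mulVec, hQP, one_mulVec,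
          ← map_intCast_mul, ← map_intCast_mul, hQA]
    _ = P.inv.map Int.cast *ᵥ x + fun i => ((P.inv *ᵥ N) i : ℝ) := by
        rw [hfix, mulVec_add, map_intCast_mulVec]

end AffineTorusAction

section NormalForm

variable {ι : Type*} {A : ι → Matrix (Fin 2) (Fin 2) ℤ}

theorem exists_isCoprime_of_mulVec_eq_self {v : Fin 2 → ℤ} (hv : v ≠ 0)
    (hA : ∀ i, A i *ᵥ v = v) : ∃ w : Fin 2 → ℤ, IsCoprime (w 0) (w 1) ∧ ∀ i, A i *ᵥ w = w := by
  have hgcd : 0 < Int.gcd (v 0) (v 1) := by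
    refine Int.gcd_pos_iff.mpr (not_and_or.mp fun h => hv ?_)
    ext i; fin_cases i <;> simp [h.1, h.2]
  obtain ⟨d, a, b, hd, hab, ha, hb⟩ := Int.exists_gcd_one' hgcd
  have hvw : v = (d : ℤ) • ![a, b] := by
    ext i; fin_cases i <;> simp [ha, hb, mul_comm]
  refine ⟨![a, b], Int.isCoprime_iff_gcd_eq_one.mpr hab, fun i => ?_⟩
  have := hA i
  rw [hvw, mulVec_smul] at this
  exact smul_right_injective _ (by positivity : (d : ℤ) ≠ 0) this

theorem exists_units_mulVec_single_eq {a b : ℤ} (h : IsCoprime a b) :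
    ∃ P : (Matrix (Fin 2) (Fin 2) ℤ)ˣ, P.val *ᵥ Pi.single 0 1 = ![a, b] := by
  obtain ⟨x, y, hxy⟩ := h
  have hdet : IsUnit (!![a, -y; b, x]).det := by
    rw [det_fin_two_of, show a * x - -y * b = 1 by linear_combination hxy]
    exact isUnit_one
  refine ⟨((isUnit_iff_isUnit_det _).mpr hdet).unit, ?_⟩
  ext i; fin_cases i <;> simp

theorem exists_units_conj_eq_triangular {v : Fin 2 → ℤ} (hv : v ≠ 0) (hA : ∀ i, A i *ᵥ v = v) :
    ∃ (P : (Matrix (Fin 2) (Fin 2) ℤ)ˣ) (μ ν : ι → ℤ),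
      ∀ i, P.inv * A i * P.val = !![1, μ i; 0, ν i] := by
  obtain ⟨w, hw, hAw⟩ := exists_isCoprime_of_mulVec_eq_self hv hA
  obtain ⟨P, hP⟩ := exists_units_mulVec_single_eq hw
  have hPw : P.val *ᵥ Pi.single 0 1 = w := by
    rw [hP]; ext i; fin_cases i <;> rfl
  refine ⟨P, fun i => (P.inv * A i * P.val) 0 1, fun i => (P.inv * A i * P.val) 1 1,
    fun i => ?_⟩
  have hcol : (P.inv * A i * P.val) *ᵥ Pi.single 0 1 = Pi.single 0 1 := by
    rw [← mulVec_mulVec, hPw, ← mulVec_mulVec, hAw, ← hPw, mulVec_mulVec, P.inv_val, one_mulVec]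
  rw [mulVec_single_one] at hcol
  have h00 := congrFun hcol 0
  have h10 := congrFun hcol 1
  simp only [col_apply] at h00 h10
  rw [eta_fin_two (P.inv * A i * P.val), h00, h10]
  simp

end NormalForm

section Triangular

variable {G : Type*} [AddCommMonoid G]

theorem triangular_mulVec_add_eq_iff {μ ν : ℤ} {x a : Fin 2 → ℝ} {N : Fin 2 → ℤ} :
    (!![1, μ; 0, ν] : Matrix (Fin 2) (Fin 2) ℤ).map (Int.cast : ℤ → ℝ) *ᵥ x + a
        = x + (fun i => (N i : ℝ)) ↔
      μ * x 1 + a 0 = N 0 ∧ ν * x 1 + a 1 = x 1 + N 1 := by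
  simp [funext_iff, Fin.forall_fin_two, vecHead, vecTail, add_assoc]

theorem isAffineCocycle_triangular_iff {μ ν : G → ℤ} {α : G → Fin 2 → ℝ} :
    IsAffineCocycle (fun g => !![1, μ g; 0, ν g]) α ↔ ∀ g h,
      α (g + h) 0 = α g 0 + α h 0 + μ g * α h 1 ∧ α (g + h) 1 = α g 1 + ν g * α h 1 := by
  simp [IsAffineCocycle, funext_iff, Fin.forall_fin_two, vecHead, vecTail, add_assoc]

variable {τ : ℝ} (t : G →+ ℝ) (ht : ∀ g, g ≠ 0 → Irrational (t g))
include ht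

theorem exists_free_cocycle_unipotent (hτ : Irrational τ) (μ : G →+ ℤ) :
    ∃ α, IsAffineCocycle (fun g => !![1, μ g; 0, 1]) α ∧
      IsFreeOnTorus (fun g => !![1, μ g; 0, 1]) α := by
  refine ⟨fun g => ![τ / 2 * μ g ^ 2 + t g, τ * μ g], ?_, ?_⟩
  · refine isAffineCocycle_triangular_iff.mpr fun g h => ⟨?_, ?_⟩ <;>
      simp only [map_add, Int.cast_add, cons_val_zero, cons_val_one, Int.cast_one] <;> ring
  · intro g hg x N hfix
    obtain ⟨h0, h1⟩ := triangular_mulVec_add_eq_iff.mp hfix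
    simp only [cons_val_zero, cons_val_one, cons_val_fin_one, Int.cast_one, one_mul,
      add_right_inj] at h0 h1
    have hμ : μ g = 0 := by
      by_contra hμ
      exact (hτ.mul_intCast hμ).ne_int (N 1) h1
    exact (ht g hg).ne_int (N 0) (by simpa [hμ] using h0)

theorem exists_free_cocycle_of_neg_one {μ ν : G → ℤ} (hν : ∀ g, ν g = 1 ∨ ν g = -1)
    (hμ : ∀ g, ν g = 1 → μ g = 0) :
    ∃ α, IsAffineCocycle (fun g => !![1, μ g; 0, ν g]) α ∧
      IsFreeOnTorus (fun g => !![1, μ g; 0, ν g]) α := by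
  refine ⟨fun g => ![t g, 0], isAffineCocycle_triangular_iff.mpr fun g h => by simp, ?_⟩
  intro g hg x N hfix
  obtain ⟨h0, h1⟩ := triangular_mulVec_add_eq_iff.mp hfix
  simp only [cons_val_zero, cons_val_one, cons_val_fin_one, add_zero] at h0 h1
  rcases hν g with hν1 | hν1
  · exact (ht g hg).ne_int (N 0) (by simpa [hμ g hν1] using h0)
  · refine ((ht g hg).intCast_mul two_ne_zero).ne_int (2 * N 0 + μ g * N 1) ?_
    rw [hν1] at h1
    push_cast at h1 ⊢
    linear_combination 2 * h0 + μ g * h1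

theorem exists_free_cocycle_triangular (hτ : Irrational τ) {μ ν : G → ℤ}
    (hmul : ∀ g h, !![1, μ (g + h); 0, ν (g + h)] = !![1, μ g; 0, ν g] * !![1, μ h; 0, ν h])
    (hν : ∀ g, ν g = 1 ∨ ν g = -1) :
    ∃ α, IsAffineCocycle (fun g => !![1, μ g; 0, ν g]) α ∧
      IsFreeOnTorus (fun g => !![1, μ g; 0, ν g]) α := by
  have hμ (g h : G) : μ (g + h) = μ h + μ g * ν h := by
    simpa using congrFun (congrFun (hmul g h) 0) 1
  by_cases hν1 : ∀ g, ν g = 1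
  · let μ' : G →+ ℤ := AddMonoidHom.mk' μ fun g h => by rw [hμ, hν1, mul_one, add_comm]
    have hB : (fun g => !![1, μ g; 0, ν g]) = fun g => !![1, μ' g; 0, 1] :=
      funext fun g => by rw [hν1]; rfl
    rw [hB]
    exact exists_free_cocycle_unipotent t ht hτ μ'
  · obtain ⟨g₀, hg₀⟩ := not_forall.mp hν1
    have hνg₀ : ν g₀ = -1 := (hν g₀).resolve_left hg₀
    refine exists_free_cocycle_of_neg_one t ht hν fun g hg => ?_
    -- compare the two ways of expanding `μ (g + g₀)`
    have := hμ g g₀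
    rw [add_comm, hμ, hg, hνg₀] at this
    linarith

end Triangular

theorem Transcendental.rat_of_int {R : Type*} [Ring R] [Algebra ℚ R] {x : R}
    (h : Transcendental ℤ x) : Transcendental ℚ x :=
  have := IsLocalization.isAlgebraic ℚ (nonZeroDivisors ℤ)
  fun hx => h (hx.restrictScalars ℤ)

open Polynomial in
theorem irrational_linearCombination_pow_succ {τ : ℝ} (hτ : Transcendental ℚ τ) {p : ℕ}
    {ℓ : Fin p → ℤ} (hℓ : ℓ ≠ 0) :
    Irrational (Fintype.linearCombination ℤ (fun i : Fin p => τ ^ ((i : ℕ) + 1)) ℓ) := by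
  rintro ⟨q, hq⟩
  refine hℓ (funext fun j => ?_)
  have hf := transcendental_iff.mp hτ (∑ i, C (ℓ i : ℚ) * X ^ ((i : ℕ) + 1) - C q)
    (by simp [hq, Fintype.linearCombination_apply])
  simpa [finsetSum_coeff, coeff_C_mul_X_pow, coeff_C, Fin.val_inj] using
    congrArg (coeff · ((j : ℕ) + 1)) hf

theorem stmt16_general (p : ℕ)
    (A : (Fin p → ℤ) → Matrix (Fin 2) (Fin 2) ℤ)
    (hhom : ∀ ℓ ℓ', A (ℓ + ℓ') = A ℓ * A ℓ')
    (hunit : ∀ ℓ, IsUnit (A ℓ).det)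
    (hfix : ∃ v : Fin 2 → ℤ, v ≠ 0 ∧ ∀ ℓ, (A ℓ).mulVec v = v) :
    ∃ α : (Fin p → ℤ) → (Fin 2 → ℝ),
      (∀ ℓ ℓ', ∃ N : Fin 2 → ℤ,
        α (ℓ + ℓ') = α ℓ + ((A ℓ).map (Int.cast : ℤ → ℝ)).mulVec (α ℓ')
          + fun i => ((N i : ℤ) : ℝ)) ∧
      (∀ ℓ : Fin p → ℤ, ℓ ≠ 0 → ∀ x : Fin 2 → ℝ,
        ¬ ∃ N : Fin 2 → ℤ,
          ((A ℓ).map (Int.cast : ℤ → ℝ)).mulVec x + α ℓ = x + fun i => ((N i : ℤ) : ℝ)) := by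
  obtain ⟨v, hv, hAv⟩ := hfix
  obtain ⟨P, μ, ν, hB⟩ := exists_units_conj_eq_triangular hv hAv
  have hmul (ℓ ℓ' : Fin p → ℤ) :
      !![1, μ (ℓ + ℓ'); 0, ν (ℓ + ℓ')] = !![1, μ ℓ; 0, ν ℓ] * !![1, μ ℓ'; 0, ν ℓ'] := by
    simp [← hB, hhom, Matrix.mul_assoc]
  have hν (ℓ : Fin p → ℤ) : ν ℓ = 1 ∨ ν ℓ = -1 := by
    have := det_units_conj' P (A ℓ) ▸ hunit ℓ
    rwa [← Units.inv_eq_val_inv, hB, det_fin_two_of, one_mul, mul_zero, sub_zero,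
      Int.isUnit_iff] at this
  have hτ : Transcendental ℚ (liouvilleNumber 3) :=
    (transcendental_liouvilleNumber (by norm_num)).rat_of_int
  obtain ⟨α, hcoc, hfree⟩ := exists_free_cocycle_triangular
    (Fintype.linearCombination ℤ fun i : Fin p => liouvilleNumber 3 ^ ((i : ℕ) + 1)).toAddMonoidHom
    (fun ℓ hℓ => irrational_linearCombination_pow_succ hτ hℓ) hτ.irrational hmul hν
  rw [← funext hB] at hcoc hfree
  refine ⟨fun ℓ => P.val.map Int.cast *ᵥ α ℓ, fun ℓ ℓ' => ⟨0, ?_⟩,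
    fun ℓ hℓ x ⟨N, hN⟩ => hfree.of_units_conj P ℓ hℓ x N hN⟩
  rw [hcoc.of_units_conj P ℓ ℓ']
  ext
  simp only [Pi.add_apply, Pi.zero_apply, Int.cast_zero, add_zero]

/-- Every `ℤ^p`-action `A` on `ℤ²` with nonzero fixed-point set is the linear
part of a free affine `ℤ^p`-action on `T² = ℝ²/ℤ²`: there is a translation part
`α : ℤ^p → ℝ²` which is a 1-cocycle over `A` modulo `ℤ²` such that `x ↦ A(ℓ)x + α(ℓ)`
has no fixed point on the torus for `ℓ ≠ 0`. -/
theorem stmt16 (p : ℕ)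
    (A : (Fin p → ℤ) → Matrix (Fin 2) (Fin 2) ℤ)
    (hhom : ∀ ℓ ℓ', A (ℓ + ℓ') = A ℓ * A ℓ')
    (h0 : A 0 = 1)
    (hunit : ∀ ℓ, IsUnit (A ℓ).det)
    (hfix : ∃ v : Fin 2 → ℤ, v ≠ 0 ∧ ∀ ℓ, (A ℓ).mulVec v = v) :
    ∃ α : (Fin p → ℤ) → (Fin 2 → ℝ),
      (∀ ℓ ℓ', ∃ N : Fin 2 → ℤ,
        α (ℓ + ℓ') = α ℓ + ((A ℓ).map (Int.cast : ℤ → ℝ)).mulVec (α ℓ')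
          + fun i => ((N i : ℤ) : ℝ)) ∧
      (∀ ℓ : Fin p → ℤ, ℓ ≠ 0 → ∀ x : Fin 2 → ℝ,
        ¬ ∃ N : Fin 2 → ℤ,
          ((A ℓ).map (Int.cast : ℤ → ℝ)).mulVec x + α ℓ = x + fun i => ((N i : ℤ) : ℝ)) :=
  stmt16_general p A hhom hunit hfix
end

section
/- Let A be the unipotent ℤ^p-action on ℤ³ given by A(ℓ)(x,y,z) = (x, μ(ℓ)x + y, ω(ℓ)x + z) with μ, ω homomorphisms ℤ^p → ℤ that are linearly independent over ℚ (so ker μ + ker ω = ℤ^p). If ψ(ℓ) = A(ℓ) + (α₁(ℓ), α₂(ℓ), β(ℓ)) is any affine ℤ^p-action on ℝ³ with linear part A, then α₁ = 0. Consequently A is not the linear part of any minimal affine ℤ^p-action on T³ (the irrationality condition of dos Santos–Urzúa fails). -/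
/-- For the unipotent `ℤ^p`-action
`A(ℓ)(x,y,z) = (x, μ(ℓ)x + y, ω(ℓ)x + z)` with `μ, ω` linearly independent over `ℚ`, any
affine `ℤ^p`-action on `ℝ³` with linear part `A`, given by translation parts
`(α₁(ℓ), α₂(ℓ), β(ℓ))`, has `α₁ = 0`; consequently the irrationality condition of
dos Santos–Urzúa fails for the fixed vector `(1,0,0)` (so `A` is not the linear part of a
minimal affine action on `T³`). -/
theorem stmt19 (p : ℕ)
    (μ ω : (Fin p → ℤ) →+ ℤ)
    (hind : ∀ a b : ℚ, (∀ ℓ, a * (μ ℓ : ℚ) + b * (ω ℓ : ℚ) = 0) → a = 0 ∧ b = 0)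
    (α₁ α₂ β : (Fin p → ℤ) → ℝ)
    (haction : ∀ ℓ ℓ' : Fin p → ℤ, ∀ x y z : ℝ,
      (x + α₁ (ℓ + ℓ'),
       (μ (ℓ + ℓ') : ℝ) * x + y + α₂ (ℓ + ℓ'),
       (ω (ℓ + ℓ') : ℝ) * x + z + β (ℓ + ℓ'))
      = ((x + α₁ ℓ') + α₁ ℓ,
         (μ ℓ : ℝ) * (x + α₁ ℓ') + ((μ ℓ' : ℝ) * x + y + α₂ ℓ') + α₂ ℓ,
         (ω ℓ : ℝ) * (x + α₁ ℓ') + ((ω ℓ' : ℝ) * x + z + β ℓ') + β ℓ)) :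
    (∀ ℓ, α₁ ℓ = 0) ∧ ¬ ∃ ℓ : Fin p → ℤ, ¬ ∃ n : ℤ, α₁ ℓ = (n : ℝ) := by
  -- symmetrized relations from the 2nd and 3rd coordinates
  have h2 : ∀ a b : Fin p → ℤ, (μ a : ℝ) * α₁ b = (μ b : ℝ) * α₁ a := by
    intro a b
    have h := haction a b 0 0 0
    have h' := haction b a 0 0 0
    rw [add_comm b a] at h'
    simp only [Prod.mk.injEq] at h h'
    have e1 := h.2.1
    have e2 := h'.2.1
    nlinarith [e1, e2]
  have h3 : ∀ a b : Fin p → ℤ, (ω a : ℝ) * α₁ b = (ω b : ℝ) * α₁ a := by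
    intro a b
    have h := haction a b 0 0 0
    have h' := haction b a 0 0 0
    rw [add_comm b a] at h'
    simp only [Prod.mk.injEq] at h h'
    have e1 := h.2.2
    have e2 := h'.2.2
    nlinarith [e1, e2]
  -- there is some ℓ₀ with μ ℓ₀ ≠ 0
  obtain ⟨ℓ₀, hℓ₀⟩ : ∃ ℓ₀, (μ ℓ₀ : ℚ) ≠ 0 := by
    by_contra hc
    push_neg at hc
    have := hind 1 0 (fun ℓ => by simp [hc ℓ])
    exact one_ne_zero this.1
  -- α₁ ℓ₀ = 0
  have hα₀ : α₁ ℓ₀ = 0 := by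
    by_contra hne
    -- then ω ℓ₀ * μ a = μ ℓ₀ * ω a for all a
    have key : ∀ a, (ω ℓ₀ : ℚ) * (μ a : ℚ) + (-(μ ℓ₀ : ℚ)) * (ω a : ℚ) = 0 := by
      intro a
      have e1 := h2 ℓ₀ a
      have e2 := h3 ℓ₀ a
      have : ((ω ℓ₀ : ℝ) * (μ a : ℝ) - (μ ℓ₀ : ℝ) * (ω a : ℝ)) * α₁ ℓ₀ = 0 := by
        have key2 : (ω ℓ₀ : ℝ) * ((μ a : ℝ) * α₁ ℓ₀) = (μ ℓ₀ : ℝ) * ((ω a : ℝ) * α₁ ℓ₀) := by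
          rw [← e1, ← e2]; ring
        nlinarith [key2]
      have hz : (ω ℓ₀ : ℝ) * (μ a : ℝ) - (μ ℓ₀ : ℝ) * (ω a : ℝ) = 0 :=
        (mul_eq_zero.mp this).resolve_right hne
      have hzz : ((ω ℓ₀ * μ a - μ ℓ₀ * ω a : ℤ) : ℝ) = 0 := by push_cast; linarith
      have : (ω ℓ₀ * μ a - μ ℓ₀ * ω a : ℤ) = 0 := by exact_mod_cast hzz
      have : ((ω ℓ₀ * μ a - μ ℓ₀ * ω a : ℤ) : ℚ) = 0 := by exact_mod_cast this
      push_cast at this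
      linarith
    have := hind _ _ key
    exact hℓ₀ (by linarith [this.2] : (μ ℓ₀ : ℚ) = 0)
  have hall : ∀ ℓ, α₁ ℓ = 0 := by
    intro ℓ
    have := h2 ℓ₀ ℓ
    rw [hα₀, mul_zero] at this
    have hμR : (μ ℓ₀ : ℝ) ≠ 0 := by exact_mod_cast (fun h => hℓ₀ (by exact_mod_cast h))
    exact (mul_eq_zero.mp this).resolve_left hμR
  refine ⟨hall, ?_⟩
  rintro ⟨ℓ, hℓ⟩
  exact hℓ ⟨0, by simp [hall ℓ]⟩
end
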